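/- arXiv:1704.05400 — 2 statements merged into one kernel-verified Lean document; each statement's English description precedes it below -/
import Mathlib

section
/- Let N be a positive integer and x : {0,…,N−1} → ℂ. For 0 ≤ k ≤ N−1 define t_k := ∑_{n=0}^{N−1−k} conj(x_n)·x_{n+k}. Then the quadruple sum ∑ conj(x_{n₃}) x_{n₁} · conj(x_{n₄}) x_{n₂}, taken over all (n₁,n₂,n₃,n₄) ∈ {0,…,N−1}⁴ satisfying n₁ − n₃ = −(n₂ − n₄) as integers, equals |t₀|² + 2·∑_{k=1}^{N−1} |t_k|². In particular this quadruple sum is a nonnegative real number. -/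
/-!
Group the quadruple sum by the common lag `d = n₁ - n₃ = n₄ - n₂`: it becomes
`∑_d c(d) c(-d)`, where `c` is the autocorrelation of `x`. Since `c(-d) = conj (c d)`,
every term is `‖c d‖²`, and this even function of `d` sums over `|d| ≤ N - 1` to
`‖c 0‖² + 2 ∑_{k ≥ 1} ‖c k‖²`; finally `c k = t k` for `0 ≤ k ≤ N - 1`.
-/

open BigOperators Finset
open scoped ComplexConjugate

theorem Function.Even.sum_Icc_neg {M : Type*} [AddCommMonoid M] {h : ℤ → M}
    (hh : h.Even) (n : ℕ) :
    ∑ d ∈ Icc (-(n : ℤ)) n, h d = h 0 + 2 • ∑ k ∈ Icc 1 n, h k := by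
  induction n with
  | zero => simp
  | succ n ih =>
    have hIcc : Icc (-((n + 1 : ℕ) : ℤ)) (n + 1 : ℕ)
        = insert (-((n + 1 : ℕ) : ℤ)) (insert ((n + 1 : ℕ) : ℤ) (Icc (-(n : ℤ)) n)) := by
      ext d; simp only [mem_Icc, mem_insert]; omega
    rw [hIcc, sum_insert (by simp; omega), sum_insert (by simp), ih, hh,
      sum_Icc_succ_top (by omega), smul_add, two_nsmul (h _)]
    abel

theorem sum_ite_eq_mul_ite_eq_neg {R : Type*} [NonUnitalNonAssocSemiring R] {a b : R}
    {p q : ℤ} {s : Finset ℤ} (hp : p ∈ s) :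
    ∑ d ∈ s, (if p = d then a else 0) * (if q = -d then b else 0)
      = if p = -q then a * b else 0 := by
  simp only [ite_mul, zero_mul]
  rw [sum_ite_eq, if_pos hp, mul_ite, mul_zero]
  exact if_congr (by omega) rfl rfl

section Autocorrelation

variable {R : Type*} [CommSemiring R] [StarRing R] {N : ℕ}

def autocorr (x : Fin N → R) (d : ℤ) : R :=
  ∑ n₁ : Fin N, ∑ n₃ : Fin N, if (n₁ : ℤ) - n₃ = d then conj (x n₃) * x n₁ else 0

theorem autocorr_neg (x : Fin N → R) (d : ℤ) : autocorr x (-d) = conj (autocorr x d) := by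
  simp only [autocorr, map_sum, apply_ite conj, map_mul, RingHomCompTriple.comp_apply,
    RingHom.id_apply, map_zero]
  rw [sum_comm]
  refine sum_congr rfl fun n₃ _ => sum_congr rfl fun n₁ _ => ?_
  rw [mul_comm]
  exact if_congr (by omega) rfl rfl

theorem autocorr_natCast (x : Fin N → R) (k : ℕ) :
    autocorr x k = ∑ n : Fin N,
      if hn : (n : ℕ) + k < N then conj (x n) * x ⟨(n : ℕ) + k, hn⟩ else 0 := by
  rw [autocorr, sum_comm]
  refine sum_congr rfl fun n₃ _ => ?_
  split_ifs with hn
  · rw [sum_eq_single_of_mem ⟨n₃ + k, hn⟩ (mem_univ _)]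
    · simp
    · intro n₁ _ hne
      exact if_neg fun h => hne (Fin.ext (by simp only; omega))
  · exact sum_eq_zero fun n₁ _ => if_neg (by omega)

theorem sum_ite_sub_eq_neg_sub_eq_sum_autocorr_mul (x : Fin N → R) :
    (∑ n₁ : Fin N, ∑ n₂ : Fin N, ∑ n₃ : Fin N, ∑ n₄ : Fin N,
        if (n₁ : ℤ) - (n₃ : ℤ) = -((n₂ : ℤ) - (n₄ : ℤ)) then
          conj (x n₃) * x n₁ * (conj (x n₄) * x n₂)
        else 0)
      = ∑ d ∈ Icc (-((N - 1 : ℕ) : ℤ)) (N - 1 : ℕ), autocorr x d * autocorr x (-d) := by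
  have hmem (n₁ n₃ : Fin N) : (n₁ : ℤ) - n₃ ∈ Icc (-((N - 1 : ℕ) : ℤ)) (N - 1 : ℕ) := by
    simp only [mem_Icc]; omega
  symm
  calc _ = ∑ n₁ : Fin N, ∑ n₃ : Fin N, ∑ n₂ : Fin N, ∑ n₄ : Fin N,
        ∑ d ∈ Icc (-((N - 1 : ℕ) : ℤ)) (N - 1 : ℕ),
          (if (n₁ : ℤ) - n₃ = d then conj (x n₃) * x n₁ else 0) *
            (if (n₂ : ℤ) - n₄ = -d then conj (x n₄) * x n₂ else 0) := by
        simp only [autocorr, sum_mul]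
        simp only [mul_sum]
        iterate 3 (rw [sum_comm]; refine sum_congr rfl fun _ _ => ?_)
        exact sum_comm
    _ = _ := by
        simp only [sum_ite_eq_mul_ite_eq_neg (hmem _ _)]
        exact sum_congr rfl fun n₁ _ => sum_comm

end Autocorrelation

theorem quadruple_sum_eq_sum_sq_abs_general (N : ℕ) (x : Fin N → ℂ)
    (t : ℕ → ℂ)
    (ht : ∀ k ≤ N - 1,
      t k = ∑ n : Fin N,
        if hn : (n : ℕ) + k < N then conj (x n) * x ⟨(n : ℕ) + k, hn⟩ else 0) :
    (∑ n₁ : Fin N, ∑ n₂ : Fin N, ∑ n₃ : Fin N, ∑ n₄ : Fin N,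
        if (n₁ : ℤ) - (n₃ : ℤ) = -((n₂ : ℤ) - (n₄ : ℤ)) then
          conj (x n₃) * x n₁ * (conj (x n₄) * x n₂)
        else 0)
      = ((‖t 0‖ ^ 2
          + 2 * ∑ k ∈ Finset.Icc 1 (N - 1), ‖t k‖ ^ 2 : ℝ) : ℂ) := by
  have hct (k : ℕ) (hk : k ≤ N - 1) : autocorr x k = t k := by
    rw [autocorr_natCast, ht k hk]
  have heven : (fun d => ‖autocorr x d‖ ^ 2).Even := fun d => by
    simp only [autocorr_neg, Complex.norm_conj]
  rw [sum_ite_sub_eq_neg_sub_eq_sum_autocorr_mul]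
  calc _ = ((∑ d ∈ Icc (-((N - 1 : ℕ) : ℤ)) (N - 1 : ℕ), ‖autocorr x d‖ ^ 2 : ℝ) : ℂ) := by
        push_cast
        simp only [autocorr_neg, Complex.mul_conj']
    _ = _ := by
        rw [heven.sum_Icc_neg, nsmul_eq_mul, Nat.cast_ofNat, ← Nat.cast_zero, hct 0 (by omega)]
        congr 3
        exact sum_congr rfl fun k hk => by rw [hct k (mem_Icc.mp hk).2]

/-- The quadruple sum `∑ conj (x n₃) * x n₁ * conj (x n₄) * x n₂` over all index
quadruples with `n₁ - n₃ = -(n₂ - n₄)` (as integers) equals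
`|t 0|² + 2 ∑_{k=1}^{N-1} |t k|²`, where `t k = ∑_{n=0}^{N-1-k} conj (x n) * x (n+k)`.
In particular, the quadruple sum is a nonnegative real number. -/
theorem quadruple_sum_eq_sum_sq_abs (N : ℕ) (hN : 0 < N) (x : Fin N → ℂ)
    (t : ℕ → ℂ)
    (ht : ∀ k ≤ N - 1,
      t k = ∑ n : Fin N,
        if hn : (n : ℕ) + k < N then conj (x n) * x ⟨(n : ℕ) + k, hn⟩ else 0) :
    (∑ n₁ : Fin N, ∑ n₂ : Fin N, ∑ n₃ : Fin N, ∑ n₄ : Fin N,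
        if (n₁ : ℤ) - (n₃ : ℤ) = -((n₂ : ℤ) - (n₄ : ℤ)) then
          conj (x n₃) * x n₁ * (conj (x n₄) * x n₂)
        else 0)
      = ((‖t 0‖ ^ 2
          + 2 * ∑ k ∈ Finset.Icc 1 (N - 1), ‖t k‖ ^ 2 : ℝ) : ℂ) :=
  quadruple_sum_eq_sum_sq_abs_general N x t ht
end

section
/- Let M, N, T, Q be positive integers, β₂ > 0 and β₄ > 0 real numbers, and w : {1,…,Q} → ℝ with w_q ≥ 0 for all q. For each t ∈ {1,…,T} and q ∈ {1,…,Q}, let h_q^{[t]} ∈ ℂ^{MN} be indexed by pairs (n,m) ∈ {0,…,N−1}×{0,…,M−1}, and for 0 ≤ k ≤ N−1 let M_{q,k}^{[t]} be the MN×MN matrix with entry ((n,m),(n′,m′)) equal to conj(h_q^{[t]}{}_{(n,m)})·h_q^{[t]}{}_{(n′,m′)} if n′ − n = k and 0 otherwise. Let t_{q,0}^{[t]} ≥ 0 be real numbers and t_{q,k}^{[t]} ∈ ℂ for 1 ≤ k ≤ N−1, and define C₁ := ∑_{t=1}^{T} ∑_{q=1}^{Q} w_q·( −(β₂ + 3β₄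 t_{q,0}^{[t]})/2 · M_{q,0}^{[t]} − 3β₄·∑_{k=1}^{N−1} conj(t_{q,k}^{[t]})·M_{q,k}^{[t]} ) and A₁ := C₁ + C₁ᴴ. If ∑_{t=1}^{T} ∑_{q=1}^{Q} w_q·‖h_q^{[t]}‖² > 0, then the Hermitian matrix A₁ has at least one negative eigenvalue, i.e. there exists an index i such that the i-th (real) eigenvalue of A₁ is strictly less than 0. -/
open Matrix BigOperators Finset
open scoped ComplexConjugate

/-- The `k`-th block diagonal of the outer-product matrix `conj h * hᵀ`:
entry `((n,m),(n',m'))` equals `conj (h (n,m)) * h (n',m')` if `n' - n = k` and `0` otherwise. -/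
noncomputable def blockMat (M N : ℕ) (h : Fin N × Fin M → ℂ) (k : ℤ) :
    Matrix (Fin N × Fin M) (Fin N × Fin M) ℂ :=
  Matrix.of fun p p' => if ((p'.1 : ℤ) - (p.1 : ℤ) = k) then conj (h p) * h p' else 0

/-!
The trace of `A₁ = C₁ + C₁ᴴ` is `2 Re tr C₁`. Only the main diagonal `M_{q,0}^{[t]}` of each
block contributes to the trace, and its trace is `‖h_q^{[t]}‖²`; hence
`tr A₁ = -∑ w_q (β₂ + 3β₄ t_{q,0}^{[t]}) ‖h_q^{[t]}‖² ≤ -β₂ ∑ w_q ‖h_q^{[t]}‖² < 0`.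
Since the trace is the sum of the eigenvalues, one of them is negative.
-/

theorem Matrix.IsHermitian.exists_eigenvalues_neg_of_re_trace_neg {𝕜 n : Type*} [RCLike 𝕜]
    [Fintype n] [DecidableEq n] {A : Matrix n n 𝕜} (hA : A.IsHermitian)
    (htr : RCLike.re A.trace < 0) : ∃ i, hA.eigenvalues i < 0 := by
  have hsum : ∑ i, hA.eigenvalues i < ∑ _i : n, (0 : ℝ) := by
    rw [hA.trace_eq_sum_eigenvalues, ← RCLike.ofReal_sum, RCLike.ofReal_re] at htr
    simpa using htr
  obtain ⟨i, -, hi⟩ := exists_lt_of_sum_lt hsum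
  exact ⟨i, hi⟩

theorem Matrix.re_trace_add_conjTranspose {𝕜 n : Type*} [RCLike 𝕜] [Fintype n]
    (C : Matrix n n 𝕜) : RCLike.re (C + Cᴴ).trace = 2 * RCLike.re C.trace := by
  rw [trace_add, trace_conjTranspose, map_add, RCLike.star_def, RCLike.conj_re]
  ring

theorem trace_blockMat_zero (M N : ℕ) (h : Fin N × Fin M → ℂ) :
    (blockMat M N h 0).trace = ((∑ i, ‖h i‖ ^ 2 : ℝ) : ℂ) := by
  simp only [trace, Matrix.diag, blockMat, of_apply, sub_self]
  push_cast
  refine sum_congr rfl fun p _ => ?_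
  rw [mul_comm, Complex.mul_conj, Complex.normSq_eq_norm_sq]
  norm_cast

theorem trace_blockMat_of_ne_zero (M N : ℕ) (h : Fin N × Fin M → ℂ) {k : ℤ} (hk : k ≠ 0) :
    (blockMat M N h k).trace = 0 := by
  simp [trace, blockMat, hk.symm]

theorem trace_smul_blockMat_zero_sub_smul_sum (M N : ℕ) (h : Fin N × Fin M → ℂ) (a b : ℂ)
    (c : ℕ → ℂ) {s : Finset ℕ} (hs : 0 ∉ s) :
    (a • blockMat M N h 0 - b • ∑ k ∈ s, c k • blockMat M N h k).trace
      = a * ((∑ i, ‖h i‖ ^ 2 : ℝ) : ℂ) := by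
  have hoff : ∑ k ∈ s, c k * (blockMat M N h k).trace = 0 :=
    sum_eq_zero fun k hk => by
      rw [trace_blockMat_of_ne_zero M N h (by exact_mod_cast ne_of_mem_of_not_mem hk hs),
        mul_zero]
  simp only [trace_sub, trace_smul, trace_sum, smul_eq_mul, hoff, trace_blockMat_zero]
  ring

theorem A1_has_negative_eigenvalue_general (M N T Q : ℕ)
    (β₂ β₄ : ℝ) (hβ₂ : 0 < β₂) (hβ₄ : 0 < β₄)
    (w : Fin Q → ℝ) (hw : ∀ q, 0 ≤ w q)
    (h : Fin T → Fin Q → (Fin N × Fin M → ℂ))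
    (t0 : Fin T → Fin Q → ℝ) (ht0 : ∀ t q, 0 ≤ t0 t q)
    (tk : Fin T → Fin Q → ℕ → ℂ)
    (C₁ A₁ : Matrix (Fin N × Fin M) (Fin N × Fin M) ℂ)
    (hC₁ : C₁ = ∑ t : Fin T, ∑ q : Fin Q, (w q : ℂ) •
      ((-(((β₂ + 3 * β₄ * t0 t q) / 2 : ℝ) : ℂ)) • blockMat M N (h t q) 0
        - ((3 * β₄ : ℝ) : ℂ) • ∑ k ∈ Finset.Icc 1 (N - 1),
            conj (tk t q k) • blockMat M N (h t q) (k : ℤ)))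
    (hA₁ : A₁ = C₁ + C₁ᴴ)
    (hHerm : A₁.IsHermitian)
    (hpos : 0 < ∑ t : Fin T, ∑ q : Fin Q,
      w q * ∑ i : Fin N × Fin M, ‖h t q i‖ ^ 2) :
    ∃ i : Fin N × Fin M, hHerm.eigenvalues i < 0 := by
  set S : Fin T → Fin Q → ℝ := fun t q => ∑ i, ‖h t q i‖ ^ 2
  have hIcc : 0 ∉ Icc 1 (N - 1) := by simp
  have htrace : C₁.trace
      = ((∑ t, ∑ q, w q * -((β₂ + 3 * β₄ * t0 t q) / 2) * S t q : ℝ) : ℂ) := by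
    simp only [hC₁, trace_sum, trace_smul,
      trace_smul_blockMat_zero_sub_smul_sum (hs := hIcc), smul_eq_mul, S]
    push_cast
    exact sum_congr rfl fun t _ => sum_congr rfl fun q _ => by ring
  have hterm (t : Fin T) (q : Fin Q) :
      w q * -((β₂ + 3 * β₄ * t0 t q) / 2) * S t q ≤ -(β₂ / 2) * (w q * S t q) := by
    have hwS : 0 ≤ w q * S t q := mul_nonneg (hw q) (sum_nonneg fun i _ => sq_nonneg _)
    nlinarith [mul_nonneg (mul_nonneg hβ₄.le (ht0 t q)) hwS]
  apply hHerm.exists_eigenvalues_neg_of_re_trace_neg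
  rw [hA₁, re_trace_add_conjTranspose, htrace, RCLike.re_to_complex, Complex.ofReal_re]
  calc 2 * ∑ t, ∑ q, w q * -((β₂ + 3 * β₄ * t0 t q) / 2) * S t q
      ≤ 2 * ∑ t, ∑ q, -(β₂ / 2) * (w q * S t q) :=
        mul_le_mul_of_nonneg_left (sum_le_sum fun t _ => sum_le_sum fun q _ => hterm t q)
          two_pos.le
    _ = -β₂ * ∑ t, ∑ q, w q * S t q := by simp only [← mul_sum]; ring
    _ < 0 := mul_neg_of_neg_of_pos (neg_neg_of_pos hβ₂) hpos

/-- Proposition 1: the Hermitian matrix `A₁ = C₁ + C₁ᴴ` of the SAA algorithm always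
has at least one negative eigenvalue. -/
theorem A1_has_negative_eigenvalue (M N T Q : ℕ)
    (hM : 0 < M) (hN : 0 < N) (hT : 0 < T) (hQ : 0 < Q)
    (β₂ β₄ : ℝ) (hβ₂ : 0 < β₂) (hβ₄ : 0 < β₄)
    (w : Fin Q → ℝ) (hw : ∀ q, 0 ≤ w q)
    (h : Fin T → Fin Q → (Fin N × Fin M → ℂ))
    (t0 : Fin T → Fin Q → ℝ) (ht0 : ∀ t q, 0 ≤ t0 t q)
    (tk : Fin T → Fin Q → ℕ → ℂ)
    (C₁ A₁ : Matrix (Fin N × Fin M) (Fin N × Fin M) ℂ)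
    (hC₁ : C₁ = ∑ t : Fin T, ∑ q : Fin Q, (w q : ℂ) •
      ((-(((β₂ + 3 * β₄ * t0 t q) / 2 : ℝ) : ℂ)) • blockMat M N (h t q) 0
        - ((3 * β₄ : ℝ) : ℂ) • ∑ k ∈ Finset.Icc 1 (N - 1),
            conj (tk t q k) • blockMat M N (h t q) (k : ℤ)))
    (hA₁ : A₁ = C₁ + C₁ᴴ)
    (hHerm : A₁.IsHermitian)
    (hpos : 0 < ∑ t : Fin T, ∑ q : Fin Q,
      w q * ∑ i : Fin N × Fin M, ‖h t q i‖ ^ 2) :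
    ∃ i : Fin N × Fin M, hHerm.eigenvalues i < 0 :=
  A1_has_negative_eigenvalue_general M N T Q β₂ β₄ hβ₂ hβ₄ w hw h t0 ht0 tk C₁ A₁ hC₁ hA₁ hHerm hpos
end
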